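/- arXiv:1711.10580 — 3 statements merged into one kernel-verified Lean document; each statement's English description precedes it below -/
import Mathlib

section
/- Let R be a ring with Jacobson radical J such that every finitely generated Artinian left R-module has finite length, and suppose injective hulls of simple left R-modules are locally Artinian. Then for every finitely generated left R-module M, ⋂_{n≥0} J^n M = 0. -/
/-!
Suppose `0 ≠ x ∈ ⋂ₙ JⁿM`. A submodule `K` maximal with `x ∉ K` makes every nonzero submodule of
`M ⧸ K` contain `x̄`, so `R ∙ x̄` is a simple essential submodule of `M ⧸ K`, and `M ⧸ K` embeds
into its injective hull `E`. Injective hulls are built as maximal essential extensions inside an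
injective module, which are retracts of it. By (⋄) the image `W` of `M` in `E` is Artinian, hence
of finite length and Noetherian; the chain `JⁿW` stabilizes, so Nakayama's lemma gives `JⁿW = 0`
for some `n`, while `x` maps to `x̄ ≠ 0` in `JⁿW`.
-/

universe u v

/-- Property (⋄): the injective hull of every simple left `R`-module is locally
Artinian. -/
def HasDiamond (R : Type u) [Ring R] : Prop :=
  ∀ (E : Type u) [AddCommGroup E] [Module R E], Module.Injective R E →
    (∃ S : Submodule R E, IsSimpleModule R S ∧ ∀ N : Submodule R E, N ≠ ⊥ → S ⊓ N ≠ ⊥) →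
    ∀ N : Submodule R E, N.FG → IsArtinian R N

open Submodule

section Lattice

variable {α : Type*} [CompleteLattice α]

def IsEssentialIn (a b : α) : Prop := ∀ c ≤ b, Disjoint a c → c = ⊥

lemma isEssentialIn_refl (a : α) : IsEssentialIn a a := fun _ hc hd => hd.eq_bot_of_ge hc

lemma IsEssentialIn.trans {a b c : α} (hab : IsEssentialIn a b) (hbc : IsEssentialIn b c) :
    IsEssentialIn a c := fun d hdc had =>
  hbc d hdc <| disjoint_iff.mpr <| by
    rw [inf_comm]
    exact hab _ inf_le_right (had.mono_right inf_le_left)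

variable [IsCompactlyGenerated α]

lemma DirectedOn.isEssentialIn_sSup {a : α} {s : Set α} (hs : DirectedOn (· ≤ ·) s)
    (h : ∀ b ∈ s, IsEssentialIn a b) : IsEssentialIn a (sSup s) := fun c hc hac => by
  rw [← inf_eq_left.mpr hc, hs.inf_sSup_eq]
  exact iSup₂_eq_bot.mpr fun b hb => h b hb _ inf_le_right (hac.mono_right inf_le_left)

lemma exists_maximal_isEssentialIn (a : α) :
    ∃ b, a ≤ b ∧ IsEssentialIn a b ∧ ∀ c, b ≤ c → IsEssentialIn b c → c = b := by
  obtain ⟨b, hab, hb⟩ := zorn_le_nonempty₀ {b | IsEssentialIn a b}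
    (fun s hs hchain _ hb => ⟨sSup s, hchain.directedOn.isEssentialIn_sSup hs,
      fun _ => le_sSup⟩) a (isEssentialIn_refl a)
  exact ⟨b, hab, hb.prop, fun c hbc hc => (hb.2 (hb.prop.trans hc) hbc).antisymm hbc⟩

lemma exists_maximal_disjoint (a : α) : ∃ b, Maximal (Disjoint · a) b := by
  obtain ⟨b, -, hb⟩ := zorn_le_nonempty₀ {b | Disjoint b a}
    (fun s hs hchain _ hb => ⟨sSup s, hchain.directedOn.disjoint_sSup_left.mpr hs,
      fun _ => le_sSup⟩) ⊥ disjoint_bot_left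
  exact ⟨b, hb⟩

end Lattice

section Module

variable {R : Type*} [Ring R] {M N : Type*} [AddCommGroup M] [Module R M]
  [AddCommGroup N] [Module R N]

lemma Submodule.disjoint_map_iff {f : M →ₗ[R] N} (hf : Function.Injective f)
    {P Q : Submodule R M} : Disjoint (P.map f) (Q.map f) ↔ Disjoint P Q := by
  rw [disjoint_iff, disjoint_iff, ← map_inf f hf, ← map_bot f,
    (map_injective_of_injective hf).eq_iff]

lemma Submodule.isEssentialIn_map_iff {f : M →ₗ[R] N} (hf : Function.Injective f)
    {P Q : Submodule R M} : IsEssentialIn (P.map f) (Q.map f) ↔ IsEssentialIn P Q := by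
  constructor
  · intro h T hTQ hPT
    apply map_injective_of_injective hf
    rw [map_bot]
    exact h _ (map_mono hTQ) ((disjoint_map_iff hf).mpr hPT)
  · intro h T hTQ hPT
    obtain ⟨T, rfl⟩ : ∃ T' : Submodule R M, T'.map f = T :=
      ⟨_, map_comap_eq_self (hTQ.trans LinearMap.map_le_range)⟩
    rw [h T ((map_le_map_iff_of_injective hf _ _).mp hTQ) ((disjoint_map_iff hf).mp hPT), map_bot]

lemma Submodule.isEssentialIn_map_mkQ_of_maximal_disjoint {P C : Submodule R M}
    (hC : Maximal (Disjoint · P) C) : IsEssentialIn (P.map C.mkQ) ⊤ := by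
  intro T _ hPT
  have hCT : C ≤ T.comap C.mkQ := by simpa using LinearMap.ker_le_comap (p := T) C.mkQ
  have hTP : Disjoint (T.comap C.mkQ) P := by
    refine disjoint_def.mpr fun z hzT hzP => disjoint_def.mp hC.prop z ?_ hzP
    have : C.mkQ z ∈ P.map C.mkQ ⊓ T := ⟨mem_map_of_mem hzP, hzT⟩
    rwa [disjoint_iff.mp hPT, mem_bot, mkQ_apply, Quotient.mk_eq_zero] at this
  rw [← map_comap_eq_of_surjective C.mkQ_surjective T, eq_bot_iff, map_le_iff_le_comap, comap_bot,
    ker_mkQ]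
  exact hC.2 hTP hCT

lemma LinearMap.injective_of_injective_comp_of_isEssentialIn_range {L : Type*} [AddCommGroup L]
    [Module R L] {f : M →ₗ[R] N} {g : N →ₗ[R] L} (hf : IsEssentialIn (range f) ⊤)
    (hgf : Function.Injective (g ∘ₗ f)) : Function.Injective g := by
  refine ker_eq_bot.mp (hf _ le_top (disjoint_def.mpr ?_))
  rintro _ ⟨m, rfl⟩ hm
  rw [hgf (by simpa using hm : (g ∘ₗ f) m = (g ∘ₗ f) 0), map_zero]

end Module

section Injective

variable {R : Type u} [Ring R] {E P : Type v} [AddCommGroup E] [Module R E] [AddCommGroup P]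
  [Module R P]

lemma Module.Injective.of_leftInverse [Module.Injective R E] (i : P →ₗ[R] E) (r : E →ₗ[R] P)
    (h : Function.LeftInverse r i) : Module.Injective R P :=
  ⟨fun _ _ _ _ _ _ f hf g => by
    obtain ⟨k, hk⟩ := Module.Injective.out f hf (i ∘ₗ g)
    exact ⟨r ∘ₗ k, fun x => by simp [hk, h _]⟩⟩

lemma Submodule.injective_of_forall_isEssentialIn_eq [Module.Injective R E] {P : Submodule R E}
    (hP : ∀ Q, P ≤ Q → IsEssentialIn P Q → Q = P) : Module.Injective R P := by
  -- With `C` a maximal complement, `P` embeds essentially in `E ⧸ C`; an extension `σ` of the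
  -- inverse back to `E` is then injective, so its range is an essential extension of `P`, i.e. `P`.
  obtain ⟨C, hC⟩ := exists_maximal_disjoint P
  set f := C.mkQ ∘ₗ P.subtype
  have hf : Function.Injective f := by
    rw [← LinearMap.ker_eq_bot, LinearMap.ker_comp, ker_mkQ, ← disjoint_iff_comap_eq_bot]
    exact hC.prop.symm
  have hfess : IsEssentialIn (LinearMap.range f) ⊤ := by
    rw [LinearMap.range_comp, range_subtype]
    exact isEssentialIn_map_mkQ_of_maximal_disjoint hC
  obtain ⟨σ, hσ⟩ := Module.Injective.out f hf P.subtype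
  have hσinj : Function.Injective σ :=
    LinearMap.injective_of_injective_comp_of_isEssentialIn_range hfess
      (by rw [(LinearMap.ext hσ : σ ∘ₗ f = P.subtype)]; exact P.injective_subtype)
  have hmap : (LinearMap.range f).map σ = P := by
    rw [← LinearMap.range_comp, (LinearMap.ext hσ : σ ∘ₗ f = P.subtype), range_subtype]
  have hrange : LinearMap.range σ = P := by
    refine hP _ (hmap ▸ LinearMap.map_le_range) ?_
    rw [← hmap, LinearMap.range_eq_map σ]
    exact (isEssentialIn_map_iff hσinj).mpr hfess
  exact .of_leftInverse P.subtype
    ((σ ∘ₗ C.mkQ).codRestrict P fun z => hrange ▸ LinearMap.mem_range_self σ _)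
    fun p => Subtype.ext (hσ p)

variable (R) [Small.{v} R]

lemma Module.exists_injective_linearMap_into_injective (C : Type v) [AddCommGroup C] [Module R C] :
    ∃ (E : Type v) (_ : AddCommGroup E) (_ : Module R E) (f : C →ₗ[R] E),
      Module.Injective R E ∧ Function.Injective f := by
  let E := CategoryTheory.Injective.under (ModuleCat.of R C)
  let ι := CategoryTheory.Injective.ι (ModuleCat.of R C)
  have : CategoryTheory.Injective (ModuleCat.of R E) := inferInstanceAs (CategoryTheory.Injective E)
  exact ⟨E, inferInstance, inferInstance, ι.hom, Module.injective_module_of_injective_object R E,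
    (ModuleCat.mono_iff_injective ι).mp inferInstance⟩

theorem Module.exists_injective_isEssentialIn_range (C : Type v) [AddCommGroup C] [Module R C] :
    ∃ (E : Type v) (_ : AddCommGroup E) (_ : Module R E) (f : C →ₗ[R] E),
      Module.Injective R E ∧ Function.Injective f ∧ IsEssentialIn (LinearMap.range f) ⊤ := by
  obtain ⟨E, _, _, ψ, hE, hψ⟩ := exists_injective_linearMap_into_injective R C
  obtain ⟨P, hψP, hψess, hPmax⟩ := exists_maximal_isEssentialIn (LinearMap.range ψ)
  refine ⟨P, inferInstance, inferInstance, ψ.codRestrict P fun c => hψP ⟨c, rfl⟩,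
    P.injective_of_forall_isEssentialIn_eq hPmax, fun a b h => hψ (congrArg Subtype.val h), ?_⟩
  rw [← isEssentialIn_map_iff P.injective_subtype, Submodule.map_top, range_subtype,
    ← LinearMap.range_comp, LinearMap.subtype_comp_codRestrict]
  exact hψess

end Injective

section Socle

variable {R : Type*} [Ring R] {M : Type*} [AddCommGroup M] [Module R M]

lemma Submodule.exists_maximal_notMem {x : M} (hx : x ≠ 0) :
    ∃ K : Submodule R M, Maximal (x ∉ ·) K := by
  obtain ⟨K, -, hK⟩ := zorn_le_nonempty₀ {K : Submodule R M | x ∉ K}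
    (fun s hs hchain K hK => ⟨sSup s, fun hxs => by
      obtain ⟨L, hL, hxL⟩ := (mem_sSup_of_directed ⟨K, hK⟩ hchain.directedOn).mp hxs
      exact hs hL hxL, fun _ => le_sSup⟩) ⊥ hx
  exact ⟨K, hK⟩

lemma Submodule.mkQ_mem_of_maximal_notMem {x : M} {K : Submodule R M} (hK : Maximal (x ∉ ·) K)
    {N : Submodule R (M ⧸ K)} (hN : N ≠ ⊥) : K.mkQ x ∈ N := by
  by_contra hxN
  have hKN : K ≤ N.comap K.mkQ := by simpa using LinearMap.ker_le_comap (p := N) K.mkQ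
  apply hN
  rw [← map_comap_eq_of_surjective K.mkQ_surjective N, eq_bot_iff, map_le_iff_le_comap, comap_bot,
    ker_mkQ]
  exact hK.2 hxN hKN

lemma isSimpleModule_span_of_forall_ne_bot_mem {y : M} (hy0 : y ≠ 0)
    (hy : ∀ N : Submodule R M, N ≠ ⊥ → y ∈ N) : IsSimpleModule R (R ∙ y) :=
  isSimpleModule_iff_isAtom.mpr ⟨by simpa using hy0, fun N hN => by
    by_contra hN0
    exact hN.not_ge (span_le.mpr (Set.singleton_subset_iff.mpr (hy N hN0)))⟩

lemma isEssentialIn_span_of_forall_ne_bot_mem {y : M} (hy0 : y ≠ 0)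
    (hy : ∀ N : Submodule R M, N ≠ ⊥ → y ∈ N) : IsEssentialIn (R ∙ y) ⊤ := fun N _ hyN => by
  by_contra hN0
  exact hy0 (disjoint_def.mp hyN y (mem_span_singleton_self y) (hy N hN0))

end Socle

theorem exists_injective_isEssentialIn_simple_apply_ne_zero {R : Type u} [Ring R] [Small.{v} R]
    {M : Type v} [AddCommGroup M] [Module R M] {x : M} (hx : x ≠ 0) :
    ∃ (E : Type v) (_ : AddCommGroup E) (_ : Module R E), Module.Injective R E ∧
      (∃ S : Submodule R E, IsSimpleModule R S ∧ IsEssentialIn S ⊤) ∧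
      ∃ φ : M →ₗ[R] E, φ x ≠ 0 := by
  obtain ⟨K, hK⟩ := exists_maximal_notMem (R := R) hx
  have hy0 : K.mkQ x ≠ 0 := by simpa [Quotient.mk_eq_zero] using hK.prop
  have hy := fun N (hN : N ≠ ⊥) => mkQ_mem_of_maximal_notMem hK hN
  obtain ⟨E, _, _, f, hE, hf, hfess⟩ := Module.exists_injective_isEssentialIn_range R (M ⧸ K)
  refine ⟨E, inferInstance, inferInstance, hE, ⟨(R ∙ K.mkQ x).map f, ?_, ?_⟩, f ∘ₗ K.mkQ, ?_⟩
  · have := isSimpleModule_span_of_forall_ne_bot_mem hy0 hy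
    exact .congr (equivMapOfInjective f hf _).symm
  · have := (isEssentialIn_map_iff hf).mpr (isEssentialIn_span_of_forall_ne_bot_mem hy0 hy)
    rw [Submodule.map_top] at this
    exact this.trans hfess
  · exact fun h => hy0 (hf (by simpa using h))

section Radical

variable {R : Type*} [Ring R] {M W : Type*} [AddCommGroup M] [Module R M] [AddCommGroup W]
  [Module R W]

lemma exists_jacobson_pow_smul_top_eq_bot [IsNoetherian R W] [IsArtinian R W] :
    ∃ n : ℕ, Ring.jacobson R ^ n • (⊤ : Submodule R W) = ⊥ := by
  set J := Ring.jacobson R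
  obtain ⟨n, hn⟩ := IsArtinian.monotone_stabilizes
    ⟨fun n => OrderDual.toDual (J ^ n • (⊤ : Submodule R W)),
      fun _ _ h => smul_mono_left (Ideal.pow_le_pow_right h)⟩
  refine ⟨n + 1, (IsNoetherian.noetherian _).eq_bot_of_le_jacobson_smul (le_of_eq ?_)⟩
  calc J ^ (n + 1) • (⊤ : Submodule R W) = J ^ (n + 2) • ⊤ :=
        (hn (n + 1) n.le_succ).symm.trans (hn (n + 2) (by omega))
    _ = J • J ^ (n + 1) • ⊤ := by
        rw [Submodule.pow_succ' _ n.succ_ne_zero, ← Ideal.smul_eq_mul, Submodule.smul_assoc]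

lemma iInf_jacobson_pow_smul_top_le_ker [IsNoetherian R W] [IsArtinian R W] (f : M →ₗ[R] W) :
    ⨅ n : ℕ, Ring.jacobson R ^ n • (⊤ : Submodule R M) ≤ LinearMap.ker f := by
  obtain ⟨n, hn⟩ := exists_jacobson_pow_smul_top_eq_bot (R := R) (W := W)
  intro x hx
  have hfx : f x ∈ (Ring.jacobson R ^ n • (⊤ : Submodule R M)).map f :=
    mem_map_of_mem (mem_iInf _ |>.mp hx n)
  rw [map_smul''] at hfx
  have := smul_mono_right (Ring.jacobson R ^ n) (le_top : (⊤ : Submodule R M).map f ≤ ⊤) hfx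
  rwa [hn, mem_bot] at this

end Radical

/-- If every finitely generated Artinian left `R`-module has finite length and `R`
satisfies (⋄), then `⋂ₙ JⁿM = 0` for every finitely generated left `R`-module `M`,
where `J` is the Jacobson radical of `R`. -/
theorem diamond_implies_radical_intersection_zero (R : Type u) [Ring R]
    (hfl : ∀ (M : Type u) [AddCommGroup M] [Module R M],
      Module.Finite R M → IsArtinian R M → IsFiniteLength R M)
    (hd : HasDiamond R)
    (M : Type u) [AddCommGroup M] [Module R M] (hM : Module.Finite R M) :
    ⨅ n : ℕ, ((Ideal.jacobson (⊥ : Ideal R)) ^ n • (⊤ : Submodule R M)) = ⊥ := by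
  rw [Ideal.jacobson_bot, eq_bot_iff]
  intro x hx
  by_contra hx0
  obtain ⟨E, _, _, hE, ⟨S, hS, hSess⟩, φ, hφx⟩ :=
    exists_injective_isEssentialIn_simple_apply_ne_zero (R := R) (by simpa using hx0)
  have : IsArtinian R (LinearMap.range φ) :=
    hd E hE ⟨S, hS, fun N hN hSN => hN (hSess N le_top (disjoint_iff.mpr hSN))⟩ _
      (Module.Finite.iff_fg.mp inferInstance)
  have : IsNoetherian R (LinearMap.range φ) :=
    (isFiniteLength_iff_isNoetherian_isArtinian.mp (hfl _ inferInstance this)).1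
  have hxker := iInf_jacobson_pow_smul_top_le_ker φ.rangeRestrict hx
  rw [LinearMap.ker_rangeRestrict] at hxker
  exact hφx hxker
end

section
/- Let (R, m) be a commutative quasi-local ring satisfying (⋄). If m^n is an idempotent ideal for some n ≥ 1, then m^n = 0. -/
namespace Submodule

variable {R M M' : Type*} [Ring R] [AddCommGroup M] [Module R M] [AddCommGroup M'] [Module R M']

def IsEssentialIn (S E : Submodule R M) : Prop :=
  ∀ N ≤ E, N ≠ ⊥ → S ⊓ N ≠ ⊥

theorem isEssentialIn_iff {S E : Submodule R M} :
    S.IsEssentialIn E ↔ ∀ a ∈ E, a ≠ 0 → ∃ r : R, r • a ∈ S ∧ r • a ≠ 0 := by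
  constructor
  · intro h a ha ha0
    have hspan : span R {a} ≠ ⊥ := by simpa [span_singleton_eq_bot] using ha0
    obtain ⟨b, hb, hb0⟩ := exists_mem_ne_zero_of_ne_bot
      (h _ ((span_singleton_le_iff_mem a E).mpr ha) hspan)
    obtain ⟨r, rfl⟩ := mem_span_singleton.mp (mem_inf.mp hb).2
    exact ⟨r, (mem_inf.mp hb).1, hb0⟩
  · intro h N hNE hN hSN
    obtain ⟨a, haN, ha0⟩ := exists_mem_ne_zero_of_ne_bot hN
    obtain ⟨r, hrS, hr0⟩ := h a (hNE haN) ha0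
    exact hr0 ((mem_bot R).mp (hSN ▸ mem_inf.mpr ⟨hrS, N.smul_mem r haN⟩))

theorem IsEssentialIn.trans {S E F : Submodule R M} (hSE : S.IsEssentialIn E)
    (hEF : E.IsEssentialIn F) : S.IsEssentialIn F := by
  rw [isEssentialIn_iff] at *
  intro a ha ha0
  obtain ⟨r, hrE, hr0⟩ := hEF a ha ha0
  obtain ⟨s, hsS, hs0⟩ := hSE _ hrE hr0
  exact ⟨s * r, by rwa [mul_smul], by rwa [mul_smul]⟩

theorem IsEssentialIn.map {S E : Submodule R M} (h : S.IsEssentialIn E) {f : M →ₗ[R] M'}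
    (hf : Function.Injective f) : (S.map f).IsEssentialIn (E.map f) := by
  rw [isEssentialIn_iff] at *
  rintro _ ⟨b, hb, rfl⟩ hb0
  obtain ⟨r, hrS, hr0⟩ := h b hb (fun h0 => hb0 (by rw [h0, map_zero]))
  exact ⟨r, by rw [← map_smul]; exact mem_map_of_mem hrS,
    by rwa [← map_smul, ne_eq, map_eq_zero_iff f hf]⟩

theorem IsEssentialIn.comap_subtype {S E : Submodule R M} (h : S.IsEssentialIn E) :
    (S.comap E.subtype).IsEssentialIn ⊤ := by
  rw [isEssentialIn_iff] at *
  intro a _ ha0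
  obtain ⟨r, hrS, hr0⟩ := h a a.2 (fun h0 => ha0 (Subtype.ext h0))
  exact ⟨r, hrS, fun h0 => hr0 (congrArg Subtype.val h0)⟩

theorem isEssentialIn_sSup {S : Submodule R M} {c : Set (Submodule R M)} (hne : c.Nonempty)
    (hc : DirectedOn (· ≤ ·) c) (h : ∀ E ∈ c, S.IsEssentialIn E) : S.IsEssentialIn (sSup c) := by
  rw [isEssentialIn_iff]
  intro a ha ha0
  obtain ⟨E, hEc, haE⟩ := (mem_sSup_of_directed hne hc).mp ha
  exact isEssentialIn_iff.mp (h E hEc) a haE ha0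

theorem exists_le_maximal_isEssentialIn {S E₀ : Submodule R M} (h : S.IsEssentialIn E₀) :
    ∃ E, E₀ ≤ E ∧ Maximal S.IsEssentialIn E :=
  zorn_le_nonempty₀ _ (fun c hcS hc E hE => ⟨sSup c,
    isEssentialIn_sSup ⟨E, hE⟩ hc.directedOn hcS, fun _ => le_sSup⟩) E₀ h

theorem exists_maximal_disjoint (E : Submodule R M) : ∃ C, Maximal (Disjoint E) C :=
  let ⟨C, _, hC⟩ := zorn_le_nonempty₀ (Disjoint E) (fun c hcD hc _ _ => ⟨sSup c,
    (hc.directedOn.disjoint_sSup_right).mpr hcD, fun _ => le_sSup⟩) ⊥ disjoint_bot_right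
  ⟨C, hC⟩

theorem map_mkQ_isEssentialIn_top {E C : Submodule R M} (hC : Maximal (Disjoint E) C) :
    (E.map C.mkQ).IsEssentialIn ⊤ := by
  rw [isEssentialIn_iff]
  rintro z - hz0
  obtain ⟨y, rfl⟩ := C.mkQ_surjective z
  have hyC : y ∉ C := fun h => hz0 ((Quotient.mk_eq_zero C).mpr h)
  have hnd := hC.not_prop_of_gt (lt_sup_iff_notMem.mpr hyC)
  simp only [disjoint_def, not_forall] at hnd
  obtain ⟨e, heE, heCy, he0⟩ := hnd
  obtain ⟨c, hc, _, hry, rfl⟩ := mem_sup.mp heCy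
  obtain ⟨r, rfl⟩ := mem_span_singleton.mp hry
  have hmk : C.mkQ (c + r • y) = r • C.mkQ y := by
    rw [map_add, map_smul, mkQ_apply, (Quotient.mk_eq_zero C).mpr hc, zero_add]
  refine ⟨r, hmk ▸ mem_map_of_mem heE, fun h0 => he0 ?_⟩
  rw [← hmk, mkQ_apply, Quotient.mk_eq_zero] at h0
  exact disjoint_def.mp hC.prop _ heE h0

theorem isCompl_of_maximal_isEssentialIn [Module.Injective R M] {S E C : Submodule R M}
    (hE : Maximal S.IsEssentialIn E) (hC : Maximal (Disjoint E) C) : IsCompl E C := by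
  have hf : Function.Injective (C.mkQ ∘ₗ E.subtype) := by
    rw [← LinearMap.ker_eq_bot, LinearMap.ker_comp, ker_mkQ, ← disjoint_iff_comap_eq_bot]
    exact hC.prop
  -- Injectivity of `M` lets the inclusion `E ↪ M` factor through `E ↪ M ⧸ C`; maximality of `E`
  -- then forces the resulting copy of `M ⧸ C` in `M` to be `E` itself.
  obtain ⟨h, hh⟩ := Module.Injective.out _ hf E.subtype
  have hhE : ∀ e ∈ E, h (C.mkQ e) = e := fun e he => hh ⟨e, he⟩
  have hEss := map_mkQ_isEssentialIn_top hC
  have hinj : Function.Injective h := by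
    rw [← LinearMap.ker_eq_bot]
    by_contra hker
    refine hEss _ le_top hker (eq_bot_iff.mpr ?_)
    rintro _ ⟨⟨e, he, rfl⟩, hk⟩
    rw [mem_bot, ← hhE e he, LinearMap.mem_ker.mp hk, map_zero]
  have hmap : (E.map C.mkQ).map h = E := by
    rw [← map_comp, ← E.range_subtype, ← LinearMap.range_comp, LinearMap.comp_assoc,
      (LinearMap.ext hh : h ∘ₗ C.mkQ ∘ₗ E.subtype = E.subtype)]
  have hErange : E ≤ LinearMap.range h := fun e he => ⟨C.mkQ e, hhE e he⟩
  have hrange : LinearMap.range h = E := by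
    refine le_antisymm (hE.2 (hE.prop.trans ?_) hErange) hErange
    simpa only [hmap, LinearMap.range_eq_map] using hEss.map hinj
  have htop : E.map C.mkQ = ⊤ := eq_top_iff.mpr fun z _ =>
    ⟨h z, hrange ▸ LinearMap.mem_range_self h z, hinj (hhE _ (hrange ▸ ⟨z, rfl⟩))⟩
  exact ⟨hC.prop, codisjoint_iff.mpr (by rwa [sup_comm, ← map_mkQ_eq_top])⟩

theorem _root_.Module.Injective.of_isCompl [Module.Injective R M] {E C : Submodule R M}
    (h : IsCompl E C) : Module.Injective R E := by
  refine ⟨fun X Y _ _ _ _ f hf g => ?_⟩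
  obtain ⟨g', hg'⟩ := Module.Injective.out f hf (E.subtype ∘ₗ g)
  exact ⟨projectionOnto E C h ∘ₗ g', fun x => by
    rw [LinearMap.comp_apply, hg', LinearMap.comp_apply, subtype_apply, projectionOnto_apply_left]⟩

theorem exists_le_isEssentialIn_injective [Module.Injective R M] {S E₀ : Submodule R M}
    (h : S.IsEssentialIn E₀) : ∃ E, E₀ ≤ E ∧ S.IsEssentialIn E ∧ Module.Injective R E := by
  obtain ⟨E, hE₀E, hE⟩ := exists_le_maximal_isEssentialIn h
  obtain ⟨C, hC⟩ := exists_maximal_disjoint E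
  exact ⟨E, hE₀E, hE.prop, .of_isCompl (isCompl_of_maximal_isEssentialIn hE hC)⟩

theorem exists_le_maximal_notMem {N : Submodule R M} {x : M} (hx : x ∉ N) :
    ∃ P, N ≤ P ∧ Maximal (x ∉ ·) P :=
  zorn_le_nonempty₀ _ (fun c hcx hc P hP => ⟨sSup c, fun hxc => by
    obtain ⟨Q, hQc, hxQ⟩ := (mem_sSup_of_directed ⟨P, hP⟩ hc.directedOn).mp hxc
    exact hcx hQc hxQ, fun _ => le_sSup⟩) N hx

variable {P : Submodule R M} {x : M}

theorem span_mkQ_le_of_maximal_notMem (hP : Maximal (x ∉ ·) P)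
    {N : Submodule R (M ⧸ P)} (hN : N ≠ ⊥) : span R {P.mkQ x} ≤ N := by
  rw [span_singleton_le_iff_mem]
  by_contra hx
  have hcomap : N.comap P.mkQ ≤ P := hP.2 hx (le_comap_mkQ P N)
  refine hN (eq_bot_iff.mpr ?_)
  rw [← map_comap_eq_of_surjective P.mkQ_surjective N, ← P.mkQ_map_self]
  exact map_mono hcomap

theorem span_mkQ_ne_bot (hP : Maximal (x ∉ ·) P) : span R {P.mkQ x} ≠ ⊥ := by
  rw [ne_eq, span_singleton_eq_bot, mkQ_apply, Quotient.mk_eq_zero]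
  exact hP.prop

theorem span_mkQ_isEssentialIn_top (hP : Maximal (x ∉ ·) P) :
    (span R {P.mkQ x}).IsEssentialIn ⊤ := fun _ _ hN => by
  rw [inf_eq_left.mpr (span_mkQ_le_of_maximal_notMem hP hN)]
  exact span_mkQ_ne_bot hP

theorem isSimpleModule_span_mkQ (hP : Maximal (x ∉ ·) P) :
    IsSimpleModule R (span R {P.mkQ x}) :=
  isSimpleModule_iff_isAtom.mpr ⟨span_mkQ_ne_bot hP, fun _ hN =>
    not_not.mp fun hN0 => hN.not_ge (span_mkQ_le_of_maximal_notMem hP hN0)⟩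

end Submodule

open CategoryTheory in
theorem HasDiamond.isArtinian {R : Type u} [Ring R] (hd : HasDiamond R) {M : Type u}
    [AddCommGroup M] [Module R M] [Module.Finite R M] {S : Submodule R M} [IsSimpleModule R S]
    (hS : S.IsEssentialIn ⊤) : IsArtinian R M := by
  let Q := Injective.under (ModuleCat.of R M)
  let ι : M →ₗ[R] Q := (Injective.ι (ModuleCat.of R M)).hom
  have hι : Function.Injective ι := (ModuleCat.mono_iff_injective _).mp inferInstance
  have : Injective (ModuleCat.of R Q) := (inferInstance : Injective Q)
  have : Module.Injective R Q := Module.injective_module_of_injective_object R Q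
  have hSι : (S.map ι).IsEssentialIn (LinearMap.range ι) := by
    simpa only [LinearMap.range_eq_map] using hS.map hι
  obtain ⟨E, hιE, hSE, hE⟩ := Submodule.exists_le_isEssentialIn_injective hSι
  have hSιE : S.map ι ≤ E := LinearMap.map_le_range.trans hιE
  have : IsSimpleModule R ((S.map ι).comap E.subtype) :=
    .congr ((Submodule.comapSubtypeEquivOfLe hSιE).trans (S.equivMapOfInjective ι hι).symm)
  let ιE : M →ₗ[R] E := ι.codRestrict E fun m => hιE ⟨m, rfl⟩
  have : IsArtinian R (LinearMap.range ιE) :=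
    hd E hE ⟨_, this, fun N hN => hSE.comap_subtype N le_top hN⟩ _
      (Module.Finite.iff_fg.mp (Module.Finite.range ιE))
  exact isArtinian_of_injective ιE.rangeRestrict
    (ιE.injective_rangeRestrict_iff.mpr fun _ _ h => hι (congrArg Subtype.val h))

theorem Ideal.le_of_isIdempotentElem_of_le_jacobson {R : Type*} [CommRing R] {I P : Ideal R}
    [IsArtinianRing (R ⧸ P)] (hI : IsIdempotentElem I) (hIP : I ≤ P.jacobson) : I ≤ P := by
  have hJ : I.map (Quotient.mk P) ≤ (⊥ : Ideal (R ⧸ P)).jacobson := by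
    rw [← map_quotient_self P, ← map_jacobson_of_surjective Quotient.mk_surjective (by rw [mk_ker])]
    exact map_mono hIP
  obtain ⟨k, hk⟩ := IsArtinianRing.isNilpotent_jacobson_bot (R := R ⧸ P)
  have hJbot : I.map (Quotient.mk P) = ⊥ :=
    IsIdempotentElem.eq_zero_of_isNilpotent (by rw [IsIdempotentElem, ← Ideal.map_mul, hI])
      ⟨k, le_antisymm ((pow_le_pow_left' hJ k).trans_eq hk) bot_le⟩
  rwa [map_eq_bot_iff_le_ker, mk_ker] at hJbot

open IsLocalRing in
/-- If a commutative quasi-local ring `(R, 𝔪)` satisfies (⋄) and `𝔪^n` is idempotent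
for some `n ≥ 1`, then `𝔪^n = 0`. -/
theorem maximalIdeal_pow_eq_bot_of_idempotent (R : Type u) [CommRing R] [IsLocalRing R]
    (hd : HasDiamond R) (n : ℕ) (hn : 1 ≤ n)
    (hidem : maximalIdeal R ^ n * maximalIdeal R ^ n = maximalIdeal R ^ n) :
    maximalIdeal R ^ n = ⊥ := by
  by_contra hI
  obtain ⟨x, hxI, hx0⟩ := Submodule.exists_mem_ne_zero_of_ne_bot hI
  obtain ⟨P, -, hP⟩ := Submodule.exists_le_maximal_notMem ((Submodule.mem_bot R).not.mpr hx0)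
  have := Submodule.isSimpleModule_span_mkQ hP
  have : IsArtinian R (R ⧸ P) := hd.isArtinian (Submodule.span_mkQ_isEssentialIn_top hP)
  have : IsArtinianRing (R ⧸ P) := isArtinian_of_tower R this
  have hPtop : P ≠ ⊤ := fun h => hP.prop (h ▸ Submodule.mem_top)
  have hle : maximalIdeal R ^ n ≤ Ideal.jacobson P := by
    rw [jacobson_eq_maximalIdeal P hPtop]
    exact Ideal.pow_le_self (by omega)
  exact hP.prop (Ideal.le_of_isIdempotentElem_of_le_jacobson hidem hle hxI)
end

section
/- Let (R, m) be a commutative quasi-local ring with residue field F = R/m and m^3 = 0. Then R satisfies (⋄) if and only if for every F-linear map f : Soc(R) → F, the quotient m/V_f is a finite-dimensional F-vector space, where V_f = {a ∈ m : f(ma) = 0}. -/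
open IsLocalRing

/-- For a commutative quasi-local ring `(R, 𝔪)` with socle `Soc(R) = Ann(𝔪)` and an
(`F = R/𝔪`-)linear map `f : Soc(R) → F`, the set `V_f = {a ∈ 𝔪 ∣ f(𝔪a) = 0}`. -/
def Vf (R : Type u) [CommRing R] [IsLocalRing R]
    (f : ↥((maximalIdeal R).annihilator) →ₗ[R] R ⧸ maximalIdeal R) : Set R :=
  {a : R | a ∈ maximalIdeal R ∧
    ∀ x, x ∈ maximalIdeal R →
      ∀ h : x * a ∈ (maximalIdeal R).annihilator, f ⟨x * a, h⟩ = 0}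

/-!
Every module killed by `𝔪` is an `F`-vector space, so for it Artinian and finitely generated
agree; since `𝔪³ = 0`, `𝔪²` lies in `Soc(R)` and in every `V_f`, so `𝔪/V_f` is such a module.

(⋄) ⇒ finiteness: for `f ≠ 0` take `I` maximal with `I ∩ Soc(R) = ker f`. Then the image of
`Soc(R)` in `R/I` is essential and isomorphic to `Soc(R)/ker f ≅ F`, and `I ⊆ V_f`, so
`𝔪/V_f` is a submodule of the Artinian module `R/V_f`.

Finiteness ⇒ (⋄): a simple essential `S ⊆ R/I` is `≅ F` and contains every element of `R/I`
killed by `𝔪`; composing `Soc(R) → R/I` with `S ≅ F` gives an `f` with `𝔪 V_f ⊆ I`. In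
`Q = (R/I)/S` the submodule `𝔪Q` is then spanned by the images of the finitely many elements
completing `V_f`, and `𝔪(𝔪Q) = 0`, so `0 ⊆ S ⊆ R/I` refines to a chain with Artinian layers.
-/

theorem exists_maximal_inf_eq {α : Type*} [CompleteLattice α] [IsCompactlyGenerated α]
    {k j : α} (h : k ≤ j) : ∃ i, Maximal (· ⊓ j = k) i := by
  refine (zorn_le_nonempty₀ {i | i ⊓ j = k} (fun c hc hchain i hi => ?_) k
    (inf_eq_left.mpr h)).imp fun _ => And.right
  refine ⟨sSup c, ?_, fun _ => le_sSup⟩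
  rw [Set.mem_ofPred_eq, hchain.directedOn.sSup_inf_eq]
  exact le_antisymm (iSup₂_le fun i hi => (hc hi).le)
    ((hc hi).ge.trans (le_iSup₂_of_le i hi le_rfl))

section Ring

variable {R M : Type*} [Ring R] [AddCommGroup M] [Module R M]

instance Ideal.Quotient.isSimpleModule (p : Ideal R) [p.IsMaximal] :
    IsSimpleModule R (R ⧸ p) :=
  isSimpleModule_iff_isCoatom.mpr (Ideal.isMaximal_def.mp ‹_›)

theorem LinearMap.isSimpleModule_range_of_ker_eq {N P : Type*} [AddCommGroup N] [Module R N]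
    [AddCommGroup P] [Module R P] [IsSimpleModule R P] {f : M →ₗ[R] P} {g : M →ₗ[R] N}
    (hf : Function.Surjective f) (h : LinearMap.ker g = LinearMap.ker f) :
    IsSimpleModule R (LinearMap.range g) :=
  IsSimpleModule.congr <| g.quotKerEquivRange.symm.trans <|
    (Submodule.quotEquivOfEq _ _ h).trans (f.quotKerEquivOfSurjective hf)

theorem Submodule.map_mkQ_inf_ne_bot_of_maximal {I J K : Submodule R M}
    (hI : Maximal (· ⊓ J = K) I) {N : Submodule R (M ⧸ I)} (hN : N ≠ ⊥) :
    J.map I.mkQ ⊓ N ≠ ⊥ := by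
  have hIN : I ≤ N.comap I.mkQ := fun x hx => by
    simp [(Submodule.Quotient.mk_eq_zero I).mpr hx]
  obtain ⟨x, ⟨hxN, hxJ⟩, hxI⟩ : ∃ x ∈ N.comap I.mkQ ⊓ J, x ∉ I := by
    by_contra! h
    have hK : N.comap I.mkQ ⊓ J = K :=
      le_antisymm (hI.prop ▸ le_inf h inf_le_right) (hI.prop ▸ inf_le_inf_right J hIN)
    apply hN
    rw [← Submodule.map_comap_eq_of_surjective I.mkQ_surjective N, ← hI.eq_of_le hK hIN,
      Submodule.mkQ_map_self]
  rw [Submodule.ne_bot_iff]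
  exact ⟨I.mkQ x, ⟨Submodule.mem_map_of_mem hxJ, hxN⟩, by simpa using hxI⟩

theorem Submodule.exists_finset_subset_le_sup_span_of_fg {N P : Submodule R M}
    (h : (P.map N.mkQ).FG) : ∃ s : Finset M, ↑s ⊆ (P : Set M) ∧ P ≤ N ⊔ span R s := by
  classical
  obtain ⟨t, ht⟩ := h
  choose g hgP hg using fun y : t => Submodule.mem_map.mp (ht ▸ subset_span y.2)
  refine ⟨Finset.univ.image g, by simpa using Set.range_subset_iff.mpr hgP, ?_⟩
  have himage : N.mkQ '' ↑(Finset.univ.image g) = t := by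
    ext y
    simp only [Finset.coe_image, Finset.coe_univ, Set.image_univ, Set.mem_image, Set.mem_range]
    exact ⟨by rintro ⟨_, ⟨z, rfl⟩, rfl⟩; exact hg z ▸ z.2, fun hy => ⟨_, ⟨⟨y, hy⟩, rfl⟩, hg _⟩⟩
  rw [← comap_map_mkQ, map_span, himage, ht]
  exact le_comap_map N.mkQ P

end Ring

section MaximalIdeal

variable {R M : Type*} [CommRing R] [AddCommGroup M] [Module R M] {p : Ideal R} [p.IsMaximal]

theorem Module.IsTorsionBySet.isArtinian_iff_finite (h : Module.IsTorsionBySet R M p) :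
    IsArtinian R M ↔ Module.Finite R M := by
  let := h.module
  let := Ideal.Quotient.field p
  have := (h.semilinearMap.isSemisimpleModule_iff_of_bijective Function.bijective_id).2
    inferInstance
  exact IsSemisimpleModule.finite_tfae.out 2 0

theorem isArtinian_of_smul_top_le [Module.Finite R M] (N : Submodule R M) [Module.Finite R N]
    (hM : p • ⊤ ≤ N) (hN : p • N = ⊥) : IsArtinian R M := by
  have htorsN : Module.IsTorsionBySet R N p := fun n r => Subtype.ext <|
    (Submodule.mem_bot R).mp (hN ▸ Submodule.smul_mem_smul r.2 n.2)
  have htorsQ : Module.IsTorsionBySet R (M ⧸ N) p :=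
    (Module.isTorsionBySet_quotient_iff N p).mpr fun _ _ hr =>
      hM (Submodule.smul_mem_smul hr Submodule.mem_top)
  exact (isArtinian_iff_submodule_quotient N).mpr
    ⟨htorsN.isArtinian_iff_finite.mpr inferInstance,
      htorsQ.isArtinian_iff_finite.mpr inferInstance⟩

end MaximalIdeal

theorem Ideal.smul_top_eq_map_of_surjective {R M : Type*} [CommRing R] [AddCommGroup M]
    [Module R M] (J : Ideal R) {φ : R →ₗ[R] M} (hφ : Function.Surjective φ) :
    J • (⊤ : Submodule R M) = Submodule.map φ J := by
  rw [← LinearMap.range_eq_top.mpr hφ, LinearMap.range_eq_map, ← Submodule.map_smul'',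
    smul_eq_mul, Ideal.mul_top]

section LocalRing

variable {R : Type*} [CommRing R] [IsLocalRing R]

theorem Submodule.mem_of_forall_smul_eq_zero_of_essential {M : Type*} [AddCommGroup M]
    [Module R M] {S : Submodule R M} (hS : ∀ N : Submodule R M, N ≠ ⊥ → S ⊓ N ≠ ⊥) {t : M}
    (ht : ∀ x ∈ maximalIdeal R, x • t = 0) : t ∈ S := by
  by_cases ht0 : t = 0
  · exact ht0 ▸ S.zero_mem
  have hspan : span R {t} ≠ ⊥ := by simpa using ht0
  obtain ⟨w, ⟨hwS, hwt⟩, hw0⟩ := (Submodule.ne_bot_iff _).mp (hS _ hspan)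
  obtain ⟨r, rfl⟩ := mem_span_singleton.mp hwt
  have hr : IsUnit r := by
    by_contra hr
    exact hw0 (ht r ((mem_maximalIdeal r).mpr hr))
  exact (S.smul_mem_iff_of_isUnit hr).mp hwS

theorem exists_linearMap_eq_zero_iff_mem {I : Ideal R} {S : Submodule R (R ⧸ I)}
    (hS : IsSimpleModule R S) (hess : ∀ N : Submodule R (R ⧸ I), N ≠ ⊥ → S ⊓ N ≠ ⊥) :
    ∃ f : (maximalIdeal R).annihilator →ₗ[R] R ⧸ maximalIdeal R,
      ∀ σ, f σ = 0 ↔ (σ : R) ∈ I := by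
  obtain ⟨J, hJ, ⟨e⟩⟩ := isSimpleModule_iff_quot_maximal.mp hS
  rw [eq_maximalIdeal hJ] at e
  have hmem (σ : (maximalIdeal R).annihilator) :
      (I.mkQ ∘ₗ (maximalIdeal R).annihilator.subtype) σ ∈ S := by
    refine Submodule.mem_of_forall_smul_eq_zero_of_essential hess fun x hx => ?_
    have hxσ : x • σ = 0 :=
      Subtype.ext ((mul_comm x σ).trans (Submodule.mem_annihilator.mp σ.2 x hx))
    rw [← map_smul, hxσ, map_zero]
  refine ⟨e.toLinearMap ∘ₗ (I.mkQ ∘ₗ Submodule.subtype _).codRestrict S hmem, fun σ => ?_⟩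
  rw [LinearMap.comp_apply, LinearEquiv.coe_coe, LinearEquiv.map_eq_zero_iff,
    ← Submodule.coe_eq_zero, LinearMap.codRestrict_apply]
  exact Submodule.Quotient.mk_eq_zero I

theorem sq_maximalIdeal_le_annihilator (hm3 : maximalIdeal R ^ 3 = ⊥) :
    maximalIdeal R ^ 2 ≤ (maximalIdeal R).annihilator :=
  fun y hy => Submodule.mem_annihilator.mpr fun z hz => by
    have : y * z ∈ maximalIdeal R ^ 3 := by rw [pow_succ]; exact Ideal.mul_mem_mul hy hz
    simpa [hm3] using this

theorem mul_mem_annihilator_maximalIdeal (hm3 : maximalIdeal R ^ 3 = ⊥) {x a : R}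
    (hx : x ∈ maximalIdeal R) (ha : a ∈ maximalIdeal R) :
    x * a ∈ (maximalIdeal R).annihilator :=
  sq_maximalIdeal_le_annihilator hm3 (pow_two (maximalIdeal R) ▸ Ideal.mul_mem_mul hx ha)

theorem sq_maximalIdeal_subset_Vf (hm3 : maximalIdeal R ^ 3 = ⊥)
    (f : (maximalIdeal R).annihilator →ₗ[R] R ⧸ maximalIdeal R) :
    ((maximalIdeal R ^ 2 : Ideal R) : Set R) ⊆ Vf R f := fun a ha =>
  ⟨Ideal.pow_le_self two_ne_zero ha, fun x hx h => by
    have hxa := Submodule.mem_annihilator.mp (sq_maximalIdeal_le_annihilator hm3 ha) x hx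
    have : (⟨x * a, h⟩ : (maximalIdeal R).annihilator) = 0 :=
      Subtype.ext ((mul_comm x a).trans hxa)
    rw [this, map_zero]⟩

def VfIdeal (hm3 : maximalIdeal R ^ 3 = ⊥)
    (f : (maximalIdeal R).annihilator →ₗ[R] R ⧸ maximalIdeal R) : Ideal R where
  carrier := Vf R f
  zero_mem' := sq_maximalIdeal_subset_Vf hm3 f (zero_mem _)
  add_mem' := by
    rintro a b ⟨ha, hfa⟩ ⟨hb, hfb⟩
    refine ⟨add_mem ha hb, fun x hx h => ?_⟩
    have hxa := mul_mem_annihilator_maximalIdeal hm3 hx ha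
    have hxb := mul_mem_annihilator_maximalIdeal hm3 hx hb
    have : (⟨x * (a + b), h⟩ : (maximalIdeal R).annihilator) = ⟨x * a, hxa⟩ + ⟨x * b, hxb⟩ :=
      Subtype.ext (mul_add x a b)
    rw [this, map_add, hfa x hx hxa, hfb x hx hxb, add_zero]
  smul_mem' := by
    rintro r a ⟨ha, hfa⟩
    refine ⟨Ideal.mul_mem_left _ r ha, fun x hx h => ?_⟩
    have hxr : x * r ∈ maximalIdeal R := Ideal.mul_mem_right r _ hx
    have : (⟨x * (r * a), h⟩ : (maximalIdeal R).annihilator) =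
        ⟨x * r * a, mul_mem_annihilator_maximalIdeal hm3 hxr ha⟩ :=
      Subtype.ext (mul_assoc x r a).symm
    exact this ▸ hfa _ hxr _

theorem exists_le_VfIdeal_isSimpleModule_essential (hm3 : maximalIdeal R ^ 3 = ⊥)
    {f : (maximalIdeal R).annihilator →ₗ[R] R ⧸ maximalIdeal R} (hf : f ≠ 0) :
    ∃ I : Ideal R, I ≤ VfIdeal hm3 f ∧ ∃ S : Submodule R (R ⧸ I), IsSimpleModule R S ∧
      ∀ N : Submodule R (R ⧸ I), N ≠ ⊥ → S ⊓ N ≠ ⊥ := by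
  obtain ⟨I, hI⟩ :=
    exists_maximal_inf_eq ((maximalIdeal R).annihilator.map_subtype_le (LinearMap.ker f))
  have hker : LinearMap.ker (I.mkQ ∘ₗ Submodule.subtype _) = LinearMap.ker f := by
    ext σ
    simp only [LinearMap.mem_ker, LinearMap.comp_apply, Submodule.mkQ_apply,
      Submodule.subtype_apply, Submodule.Quotient.mk_eq_zero]
    constructor
    · intro hσ
      obtain ⟨τ, hτ, hτσ⟩ := hI.prop.le ⟨hσ, σ.2⟩
      exact Subtype.val_injective hτσ ▸ hτ
    · exact fun hσ => (hI.prop.ge ⟨σ, hσ, rfl⟩).1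
  have hIm : I ≤ maximalIdeal R := by
    refine le_maximalIdeal fun hI => hf (LinearMap.ker_eq_top.mp ?_)
    rw [← hker, hI]
    exact eq_top_iff.mpr fun σ _ => (Submodule.Quotient.mk_eq_zero ⊤).mpr Submodule.mem_top
  refine ⟨I, fun b hb => ⟨hIm hb, fun x _ h => ?_⟩,
    Submodule.map I.mkQ (maximalIdeal R).annihilator, ?_,
    fun N hN => Submodule.map_mkQ_inf_ne_bot_of_maximal hI hN⟩
  · rw [← LinearMap.mem_ker, ← hker]
    exact (Submodule.Quotient.mk_eq_zero I).mpr (Ideal.mul_mem_left I x hb)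
  · rw [← (maximalIdeal R).annihilator.range_subtype, ← LinearMap.range_comp]
    exact LinearMap.isSimpleModule_range_of_ker_eq (f.surjective_of_ne_zero hf) hker

theorem exists_finset_of_isArtinian_of_le_VfIdeal (hm3 : maximalIdeal R ^ 3 = ⊥)
    {f : (maximalIdeal R).annihilator →ₗ[R] R ⧸ maximalIdeal R} {I : Ideal R}
    (hIV : I ≤ VfIdeal hm3 f) [IsArtinian R (R ⧸ I)] :
    ∃ s : Finset R, ↑s ⊆ (maximalIdeal R : Set R) ∧
      (maximalIdeal R : Set R) ⊆ (Submodule.span R (Vf R f ∪ ↑s) : Set R) := by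
  set V := VfIdeal hm3 f
  have : IsArtinian R (R ⧸ V) := isArtinian_of_surjective _ _ (Submodule.factor_surjective hIV)
  have htors : Module.IsTorsionBySet R (Submodule.map V.mkQ (maximalIdeal R)) (maximalIdeal R) := by
    rintro ⟨_, a, ha, rfl⟩ ⟨x, hx⟩
    refine Subtype.ext ((Submodule.Quotient.mk_eq_zero V).mpr ?_)
    exact sq_maximalIdeal_subset_Vf hm3 f (pow_two (maximalIdeal R) ▸ Ideal.mul_mem_mul hx ha)
  obtain ⟨s, hsm, hms⟩ := Submodule.exists_finset_subset_le_sup_span_of_fg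
    (Module.Finite.iff_fg.mp (htors.isArtinian_iff_finite.mp inferInstance))
  refine ⟨s, hsm, ?_⟩
  rw [Submodule.span_union, show Submodule.span R (Vf R f) = V from V.span_eq]
  exact hms

theorem isArtinian_quotient_of_isSimpleModule_essential (hm3 : maximalIdeal R ^ 3 = ⊥)
    (hfin : ∀ f : (maximalIdeal R).annihilator →ₗ[R] R ⧸ maximalIdeal R,
      ∃ s : Finset R, ↑s ⊆ (maximalIdeal R : Set R) ∧
        (maximalIdeal R : Set R) ⊆ (Submodule.span R (Vf R f ∪ ↑s) : Set R))
    {I : Ideal R} {S : Submodule R (R ⧸ I)} (hS : IsSimpleModule R S)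
    (hess : ∀ N : Submodule R (R ⧸ I), N ≠ ⊥ → S ⊓ N ≠ ⊥) : IsArtinian R (R ⧸ I) := by
  classical
  obtain ⟨f, hf⟩ := exists_linearMap_eq_zero_iff_mem hS hess
  obtain ⟨s, hsm, hms⟩ := hfin f
  set φ : R →ₗ[R] (R ⧸ I) ⧸ S := S.mkQ ∘ₗ I.mkQ
  have hφ : Function.Surjective φ := S.mkQ_surjective.comp I.mkQ_surjective
  have hVφ : Submodule.span R (Vf R f) ≤ LinearMap.ker φ := by
    refine Submodule.span_le.mpr fun a ⟨ha, hfa⟩ => ?_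
    refine (Submodule.Quotient.mk_eq_zero S).mpr
      (Submodule.mem_of_forall_smul_eq_zero_of_essential hess fun x hx => ?_)
    rw [← map_smul, smul_eq_mul, Submodule.mkQ_apply, Submodule.Quotient.mk_eq_zero]
    exact (hf _).mp (hfa x hx (mul_mem_annihilator_maximalIdeal hm3 hx ha))
  have hmφ : Submodule.map φ (maximalIdeal R) = Submodule.span R (s.image φ : Set _) := by
    refine le_antisymm ?_ ?_
    · calc Submodule.map φ (maximalIdeal R) ≤ (Submodule.span R (Vf R f ∪ s)).map φ :=
            Submodule.map_mono hms
        _ = Submodule.span R (s.image φ : Set _) := by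
            rw [Submodule.span_union, Submodule.map_sup, LinearMap.le_ker_iff_map.mp hVφ,
              bot_sup_eq, Submodule.map_span, Finset.coe_image]
    · rw [Finset.coe_image, ← Submodule.map_span]
      exact Submodule.map_mono (Submodule.span_le.mpr hsm)
  refine (isArtinian_iff_submodule_quotient S).mpr ⟨inferInstance,
    isArtinian_of_smul_top_le (p := maximalIdeal R) (Submodule.span R (s.image φ : Set _)) ?_ ?_⟩
  · rw [Ideal.smul_top_eq_map_of_surjective _ hφ, hmφ]
  · rw [← hmφ, ← Ideal.smul_top_eq_map_of_surjective _ hφ, ← Submodule.mul_smul,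
      Ideal.smul_top_eq_map_of_surjective _ hφ, ← LinearMap.le_ker_iff_map]
    exact fun a ha => hVφ (Submodule.subset_span
      (sq_maximalIdeal_subset_Vf hm3 f (by rwa [pow_two])))

end LocalRing

/-- Let `(R, 𝔪)` be a commutative quasi-local ring with residue field `F = R/𝔪` and
`𝔪³ = 0`.  Then `R` satisfies (⋄) (every cyclic `R`-module with essential simple socle
is Artinian) if and only if for every `F`-linear map `f : Soc(R) → F` the quotient
`𝔪/V_f` is a finite-dimensional `F`-vector space, i.e. there are finitely many
elements of `𝔪` which together with `V_f` span `𝔪`. -/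
theorem diamond_iff_quot_Vf_finiteDimensional (R : Type u) [CommRing R]
    [IsLocalRing R] (hm3 : maximalIdeal R ^ 3 = ⊥) :
    (∀ I : Ideal R,
        (∃ S : Submodule R (R ⧸ I), IsSimpleModule R S ∧
          ∀ N : Submodule R (R ⧸ I), N ≠ ⊥ → S ⊓ N ≠ ⊥) →
        IsArtinian R (R ⧸ I)) ↔
      (∀ f : ↥((maximalIdeal R).annihilator) →ₗ[R] R ⧸ maximalIdeal R,
        ∃ s : Finset R, ↑s ⊆ (maximalIdeal R : Set R) ∧
          (maximalIdeal R : Set R) ⊆ (Submodule.span R (Vf R f ∪ ↑s) : Set R)) := by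
  refine ⟨fun hdia f => ?_, fun hfin I ⟨S, hS, hess⟩ =>
    isArtinian_quotient_of_isSimpleModule_essential hm3 hfin hS hess⟩
  by_cases hf : f = 0
  · refine ⟨∅, by simp, fun a ha => Submodule.subset_span (Or.inl ⟨ha, fun _ _ _ => ?_⟩)⟩
    simp [hf]
  obtain ⟨I, hIV, S, hS, hess⟩ := exists_le_VfIdeal_isSimpleModule_essential hm3 hf
  have := hdia I ⟨S, hS, hess⟩
  exact exists_finset_of_isArtinian_of_le_VfIdeal hm3 hIV
end
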